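/- arXiv:2305.11076 — 4 statements merged into one kernel-verified Lean document; each statement's English description precedes it below -/
import Mathlib

section
/- For every j with 0 ≤ j ≤ m, the j-th derivative of the two-point Hermite interpolant H_{m,n} at s = 0 satisfies H_{m,n}^{(j)}(0)/j! = p_j. -/
noncomputable def blend (m n : ℕ) (p q : ℕ → ℝ) (s : ℝ) : ℝ :=
  (∑ j ∈ Finset.range (m + 1),
      (∑ k ∈ Finset.range (m - j + 1),
          ((n + k).choose k : ℝ) * s ^ (k + j) * (1 - s) ^ (n + 1)) * p j)
  + ∑ j ∈ Finset.range (n + 1),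
      (∑ k ∈ Finset.range (n - j + 1),
          ((m + k).choose k : ℝ) * s ^ (m + 1) * (1 - s) ^ (k + j)) * (-1 : ℝ) ^ j * q j

/-! Since `Σ_k C(n+k,k) s^k = (1 - s)^{-(n+1)}`, the inner sum of the `p`-part is the truncation
`T` of that series at degree `m - j`, so `(1 - s)^(n+1) T(s) ≡ 1 mod s^(m-j+1)`. Hence
`H_{m,n}(s) ≡ Σ_j p_j s^j mod s^(m+1)`, the `q`-part being a multiple of `s^(m+1)`, and the
Taylor coefficients of a polynomial at `0` are its coefficients. -/

open Polynomial

namespace Polynomial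

variable {𝕜 : Type*} [NontriviallyNormedField 𝕜]

theorem iteratedDeriv_eval (p : 𝕜[X]) (k : ℕ) :
    iteratedDeriv k (fun x => p.eval x) = fun x => (derivative^[k] p).eval x := by
  induction k with
  | zero => simp
  | succ k ih =>
    ext x
    rw [iteratedDeriv_succ, ih, Function.iterate_succ_apply', Polynomial.deriv]

theorem iteratedDeriv_eval_zero (p : 𝕜[X]) (k : ℕ) :
    iteratedDeriv k (fun x => p.eval x) 0 = k.factorial * p.coeff k := by
  simp only [iteratedDeriv_eval]
  rw [← coeff_zero_eq_eval_zero, coeff_iterate_derivative, zero_add,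
    Nat.descFactorial_self, nsmul_eq_mul]

end Polynomial

section

variable {R : Type*} [CommRing R]

theorem PowerSeries.trunc_invOneSubPow_succ (n r : ℕ) :
    trunc r (invOneSubPow R (n + 1)).val =
      ∑ k ∈ Finset.range r, Polynomial.C ((n + k).choose k : R) * Polynomial.X ^ k := by
  ext d
  simp only [invOneSubPow_val_succ_eq_mk_add_choose, coeff_trunc, coeff_mk,
    Polynomial.finsetSum_coeff, Polynomial.coeff_C_mul_X_pow, Finset.sum_ite_eq,
    Finset.mem_range]
  rw [Nat.choose_symm_add]

theorem X_pow_dvd_one_sub_X_pow_mul_trunc_invOneSubPow_sub_one (d r : ℕ) :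
    (X : R[X]) ^ r ∣
      (1 - X) ^ d * PowerSeries.trunc r (PowerSeries.invOneSubPow R d).val - 1 := by
  have htrunc : PowerSeries.trunc r
      (((1 - X) ^ d * PowerSeries.trunc r (PowerSeries.invOneSubPow R d).val - 1 : R[X]) :
        PowerSeries R) = 0 := by
    push_cast
    rw [map_sub, PowerSeries.trunc_mul_trunc, ← PowerSeries.invOneSubPow_inv_eq_one_sub_pow,
      Units.inv_val, sub_self]
  rw [X_pow_dvd_iff]
  intro k hk
  rw [← coeff_coe, ← PowerSeries.coeff_coe_trunc_of_lt hk, htrunc, coeff_coe, coeff_zero]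

noncomputable def blendPoly (m n : ℕ) (p q : ℕ → R) : R[X] :=
  (∑ j ∈ Finset.range (m + 1), C (p j) * X ^ j * (1 - X) ^ (n + 1) *
      PowerSeries.trunc (m - j + 1) (PowerSeries.invOneSubPow R (n + 1)).val) +
    X ^ (m + 1) * ∑ j ∈ Finset.range (n + 1), C ((-1) ^ j * q j) * (1 - X) ^ j *
      (PowerSeries.trunc (n - j + 1) (PowerSeries.invOneSubPow R (m + 1)).val).comp (1 - X)

theorem X_pow_dvd_blendPoly_sub (m n : ℕ) (p q : ℕ → R) :
    X ^ (m + 1) ∣ blendPoly m n p q - ∑ j ∈ Finset.range (m + 1), C (p j) * X ^ j := by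
  rw [blendPoly, add_sub_right_comm, ← Finset.sum_sub_distrib]
  refine dvd_add (Finset.dvd_sum fun j hj => ?_) (dvd_mul_right _ _)
  rw [show m + 1 = j + (m - j + 1) by grind, pow_add, mul_assoc (C (p j) * X ^ j), ← mul_sub_one]
  exact mul_dvd_mul (dvd_mul_left _ _)
    (X_pow_dvd_one_sub_X_pow_mul_trunc_invOneSubPow_sub_one _ _)

theorem coeff_blendPoly_of_le (m n : ℕ) (p q : ℕ → R) {j : ℕ} (hj : j ≤ m) :
    (blendPoly m n p q).coeff j = p j := by
  have hcoeff := X_pow_dvd_iff.mp (X_pow_dvd_blendPoly_sub m n p q) j (by omega)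
  rw [coeff_sub, sub_eq_zero, finsetSum_coeff] at hcoeff
  simpa [coeff_C_mul_X_pow, Finset.mem_range, Nat.lt_succ_iff.mpr hj] using hcoeff

end

theorem blend_eq_eval_blendPoly (m n : ℕ) (p q : ℕ → ℝ) :
    blend m n p q = fun s => (blendPoly m n p q).eval s := by
  ext s
  simp only [blend, blendPoly, PowerSeries.trunc_invOneSubPow_succ, eval_add, eval_mul,
    eval_finsetSum, eval_pow, eval_C, eval_X, eval_sub, eval_one, eval_comp]
  simp only [Finset.mul_sum, Finset.sum_mul]
  congr 1 <;> exact Finset.sum_congr rfl fun j _ => Finset.sum_congr rfl fun k _ => by ring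

theorem blend_iteratedDeriv_zero (m n : ℕ) (p q : ℕ → ℝ) (j : ℕ) (hj : j ≤ m) :
    iteratedDeriv j (blend m n p q) 0 / (Nat.factorial j : ℝ) = p j := by
  rw [blend_eq_eval_blendPoly, iteratedDeriv_eval_zero, coeff_blendPoly_of_le m n p q hj,
    mul_div_cancel_left₀ _ (by positivity)]
end

section
/- The integral over [0,1] of the two-point Hermite interpolant H_{m,n}(s) equals ((m+1)!/(m+n+2)!) Σ_{j=0}^{m} ((n+m-j+1)! / ((j+1)(m-j)!)) p_j + ((n+1)!/(m+n+2)!) Σ_{j=0}^{n} ((n+m-j+1)! / ((j+1)(n-j)!)) (-1)^j q_j. -/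
open Finset Nat

/-! The coefficient of `p j` in `blend` is a sum of monomials `s ^ a * (1 - s) ^ b`, whose integrals
are the Beta values `a! b! / (a + b + 1)!`; the coefficient of `q j` is a sum of the same shape
evaluated at `1 - s`, so the reflection `s ↦ 1 - s` reduces it to the first case. The resulting sum
of Beta values has a closed form, proved by induction on the number of terms. -/

theorem integral_pow_mul_one_sub_pow (a b : ℕ) :
    ∫ x in (0 : ℝ)..1, x ^ a * (1 - x) ^ b = (a ! * b ! / (a + b + 1)! : ℝ) := by
  induction b generalizing a with
  | zero => simp [Nat.factorial_succ, field]
  | succ b ih =>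
    have split : ∫ x in (0 : ℝ)..1, x ^ a * (1 - x) ^ (b + 1)
        = (∫ x in (0 : ℝ)..1, x ^ a * (1 - x) ^ b) - ∫ x in (0 : ℝ)..1, x ^ (a + 1) * (1 - x) ^ b := by
      rw [← intervalIntegral.integral_sub (Continuous.intervalIntegrable (by fun_prop) _ _)
        (Continuous.intervalIntegrable (by fun_prop) _ _)]
      congr 1 with x
      ring
    rw [split, ih, ih, show a + 1 + b + 1 = a + (b + 1) + 1 by ring]
    simp only [Nat.factorial_succ, ← add_assoc]
    push_cast
    field_simp
    ring

theorem sum_add_choose_mul_beta (ν j t : ℕ) :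
    ∑ k ∈ range (t + 1), ((ν + k).choose k : ℝ) * ((k + j)! * (ν + 1)! / (k + j + ν + 2)!)
      = (j + t + 1)! * (ν + t + 1)! / ((j + 1) * t ! * (j + t + ν + 2)!) := by
  induction t with
  | zero => simp [Nat.factorial_succ, field]
  | succ t ih =>
    rw [sum_range_succ, ih, ← Nat.choose_symm_add, Nat.cast_add_choose,
      show ν + (t + 1) = ν + t + 1 by omega, show t + 1 + j = j + t + 1 by omega,
      show j + (t + 1) = j + t + 1 by omega, show j + t + 1 + ν + 2 = j + t + ν + 2 + 1 by omega]
    simp only [Nat.factorial_succ (j + t + ν + 2), Nat.factorial_succ (j + t + 1),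
      Nat.factorial_succ (ν + t + 1), Nat.factorial_succ t, Nat.factorial_succ ν]
    push_cast
    field_simp
    ring

noncomputable def hermiteWeight (ν j t : ℕ) (s : ℝ) : ℝ :=
  ∑ k ∈ range (t + 1), ((ν + k).choose k : ℝ) * s ^ (k + j) * (1 - s) ^ (ν + 1)

@[fun_prop]
theorem continuous_hermiteWeight (ν j t : ℕ) : Continuous (hermiteWeight ν j t) := by
  unfold hermiteWeight
  fun_prop

theorem integral_hermiteWeight (ν j t : ℕ) :
    ∫ s in (0 : ℝ)..1, hermiteWeight ν j t s
      = (j + t + 1)! * (ν + t + 1)! / ((j + 1) * t ! * (j + t + ν + 2)!) := by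
  unfold hermiteWeight
  rw [← sum_add_choose_mul_beta,
    intervalIntegral.integral_finsetSum fun k _ => Continuous.intervalIntegrable (by fun_prop) _ _]
  refine sum_congr rfl fun k _ => ?_
  simp only [mul_assoc, intervalIntegral.integral_const_mul, integral_pow_mul_one_sub_pow]
  ring_nf

theorem integral_hermiteWeight_sub {ν j m : ℕ} (hj : j ≤ m) :
    ∫ s in (0 : ℝ)..1, hermiteWeight ν j (m - j) s
      = (m + 1)! / (m + ν + 2)! * ((ν + m - j + 1)! / ((j + 1) * (m - j)!)) := by
  rw [integral_hermiteWeight, show j + (m - j) = m by omega, show ν + (m - j) = ν + m - j by omega]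
  field_simp

theorem blend_eq (m n : ℕ) (p q : ℕ → ℝ) (s : ℝ) :
    blend m n p q s = ∑ j ∈ range (m + 1), hermiteWeight n j (m - j) s * p j
      + ∑ j ∈ range (n + 1), hermiteWeight m j (n - j) (1 - s) * (-1) ^ j * q j := by
  simp only [blend, hermiteWeight, sub_sub_cancel, mul_right_comm _ (s ^ (m + 1))]

theorem integral_blend (m n : ℕ) (p q : ℕ → ℝ) :
    ∫ s in (0 : ℝ)..1, blend m n p q s
      = ((m + 1).factorial : ℝ) / ((m + n + 2).factorial : ℝ)
          * ∑ j ∈ Finset.range (m + 1),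
              ((n + m - j + 1).factorial : ℝ) / ((j + 1 : ℝ) * ((m - j).factorial : ℝ)) * p j
        + ((n + 1).factorial : ℝ) / ((m + n + 2).factorial : ℝ)
          * ∑ j ∈ Finset.range (n + 1),
              ((n + m - j + 1).factorial : ℝ) / ((j + 1 : ℝ) * ((n - j).factorial : ℝ))
                * (-1 : ℝ) ^ j * q j := by
  simp_rw [blend_eq]
  rw [intervalIntegral.integral_add (Continuous.intervalIntegrable (by fun_prop) _ _)
      (Continuous.intervalIntegrable (by fun_prop) _ _),
    intervalIntegral.integral_finsetSum fun j _ => Continuous.intervalIntegrable (by fun_prop) _ _,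
    intervalIntegral.integral_finsetSum fun j _ => Continuous.intervalIntegrable (by fun_prop) _ _,
    mul_sum, mul_sum]
  congr 1 <;> refine sum_congr rfl fun j hj => ?_
  · rw [intervalIntegral.integral_mul_const, integral_hermiteWeight_sub (mem_range_succ_iff.mp hj)]
    ring
  · rw [intervalIntegral.integral_mul_const, intervalIntegral.integral_mul_const,
      intervalIntegral.integral_comp_sub_left (hermiteWeight m j (n - j)), sub_self, sub_zero,
      integral_hermiteWeight_sub (mem_range_succ_iff.mp hj), add_comm m n]
    ring
end

section
/- Let H_{m,n}(𝟏, (−1)^k) denote the two-point Hermite interpolant with data p_j = 1 for all 0 ≤ j ≤ m and q_j = (−1)^j for all 0 ≤ j ≤ n. Then ∫_0^1 H_{m,n}(𝟏, (−1)^k)(s) ds = 2Ψ(n+m+3) − Ψ(m+3) − Ψ(n+3) + (n+m+4)/((n+2)(m+2)), where Ψ(n+1) = −γ + Σ_{k=1}^{n} 1/k is the digamma function evaluated at integers. -/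
noncomputable def harm (k : ℕ) : ℝ := ∑ i ∈ Finset.range k, 1 / (i + 1 : ℝ)

/-!
For these data the signs `(-1)^j q_j` cancel, and collecting the double sums along `t = j + k`
turns each coefficient into a hockey-stick sum, so the interpolant becomes a sum of Bernstein-type
terms `C(n+1+t, n+1) s^t (1-s)^(n+1)` and `C(m+1+t, m+1) s^(m+1) (1-s)^t`. By the Beta integral
each such term `C(a+b, b) x^a (1-x)^b` integrates to `1/(a+b+1)`, so the integral is a sum of two
blocks of consecutive harmonic terms.
-/

open Finset intervalIntegral

theorem sum_range_choose_add (n t : ℕ) :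
    ∑ k ∈ range (t + 1), (n + k).choose k = (n + 1 + t).choose (n + 1) := by
  have hsymm (k : ℕ) : (n + k).choose k = (k + n).choose n := by
    rw [add_comm, Nat.choose_symm_add]
  rw [sum_congr rfl fun k _ => hsymm k, Nat.sum_range_add_choose, add_comm t, add_right_comm]

theorem sum_range_sum_range_choose_mul {R : Type*} [Semiring R] (m n : ℕ) (f : ℕ → R) :
    ∑ j ∈ range (m + 1), ∑ k ∈ range (m - j + 1), ((n + k).choose k : R) * f (k + j)
      = ∑ t ∈ range (m + 1), ((n + 1 + t).choose (n + 1) : R) * f t := by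
  rw [sum_congr rfl fun j hj => by rw [← Nat.sub_add_comm (mem_range_succ_iff.mp hj)],
    ← sum_range_diag_flip (m + 1) (fun j k => ((n + k).choose k : R) * f (k + j))]
  refine sum_congr rfl fun t _ => ?_
  rw [← sum_range_choose_add, Nat.cast_sum, sum_mul, ← sum_range_reflect]
  refine sum_congr rfl fun i hi => ?_
  have : i ≤ t := mem_range_succ_iff.mp hi
  simp only [add_tsub_cancel_right]
  congr 3 <;> omega

theorem integral_pow_mul_one_sub_pow_succ (a b : ℕ) :
    (a + 1 : ℝ) * ∫ x in (0 : ℝ)..1, x ^ a * (1 - x) ^ (b + 1)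
      = (b + 1 : ℝ) * ∫ x in (0 : ℝ)..1, x ^ (a + 1) * (1 - x) ^ b := by
  have hderiv (x : ℝ) : HasDerivAt (fun y : ℝ => y ^ (a + 1) * (1 - y) ^ (b + 1))
      ((a + 1 : ℝ) * (x ^ a * (1 - x) ^ (b + 1)) - (b + 1 : ℝ) * (x ^ (a + 1) * (1 - x) ^ b)) x := by
    refine ((hasDerivAt_pow (a + 1) x).fun_mul
      (((hasDerivAt_id' x).const_sub 1).fun_pow (b + 1))).congr_deriv ?_
    simp only [Nat.add_sub_cancel]
    push_cast
    ring
  have hftc := integral_eq_sub_of_hasDerivAt (fun x _ => hderiv x)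
    (Continuous.intervalIntegrable (by fun_prop) 0 1)
  rw [integral_sub, integral_const_mul, integral_const_mul] at hftc
  · simpa [sub_eq_zero] using hftc
  all_goals exact (Continuous.intervalIntegrable (by fun_prop) 0 1)

theorem choose_mul_integral_pow_mul_one_sub_pow (a b : ℕ) :
    ((a + b).choose b : ℝ) * ∫ x in (0 : ℝ)..1, x ^ a * (1 - x) ^ b = 1 / (a + b + 1 : ℝ) := by
  induction b generalizing a with
  | zero => simp [integral_pow]
  | succ b ih =>
    have hpascal : ((a + b + 1).choose (b + 1) : ℝ) * (b + 1) = (a + b + 1).choose b * (a + 1) := by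
      exact_mod_cast (Nat.choose_succ_right_eq (a + b + 1) b).trans (by congr 1; omega)
    have hrec := integral_pow_mul_one_sub_pow_succ a b
    have hstep : ((a + b + 1).choose (b + 1) : ℝ) * ∫ x in (0 : ℝ)..1, x ^ a * (1 - x) ^ (b + 1)
        = (a + 1 + b).choose b * ∫ x in (0 : ℝ)..1, x ^ (a + 1) * (1 - x) ^ b := by
      refine mul_left_cancel₀ (a.cast_add_one_ne_zero (R := ℝ)) ?_
      rw [add_right_comm a 1 b]
      linear_combination ((a + b + 1).choose (b + 1) : ℝ) * hrec
        + (∫ x in (0 : ℝ)..1, x ^ (a + 1) * (1 - x) ^ b) * hpascal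
    rw [← add_assoc, hstep, ih]
    push_cast
    ring

theorem integral_choose_mul_pow_mul_one_sub_pow (a b : ℕ) :
    ∫ x in (0 : ℝ)..1, ((a + b).choose b : ℝ) * (x ^ a * (1 - x) ^ b) = 1 / (a + b + 1 : ℝ) := by
  rw [integral_const_mul, choose_mul_integral_pow_mul_one_sub_pow]

theorem harm_add (a k : ℕ) :
    harm (a + k) = harm a + ∑ t ∈ range k, 1 / ((a + t : ℕ) + 1 : ℝ) := by
  rw [harm, harm, sum_range_add]

theorem harm_succ (a : ℕ) : harm (a + 1) = harm a + 1 / (a + 1 : ℝ) := by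
  simp [harm_add]

theorem blend_one_neg_one_pow (m n : ℕ) (s : ℝ) :
    blend m n (fun _ => 1) (fun j => (-1 : ℝ) ^ j) s
      = ∑ t ∈ range (m + 1), ((n + 1 + t).choose (n + 1) : ℝ) * (s ^ t * (1 - s) ^ (n + 1))
        + ∑ t ∈ range (n + 1), ((m + 1 + t).choose (m + 1) : ℝ) * (s ^ (m + 1) * (1 - s) ^ t) := by
  have hsign (j : ℕ) : (-1 : ℝ) ^ j * (-1) ^ j = 1 := by rw [← mul_pow]; norm_num
  rw [blend, ← sum_range_sum_range_choose_mul, ← sum_range_sum_range_choose_mul]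
  simp only [mul_one, mul_assoc, hsign]

theorem integral_blend_ones_alt (m n : ℕ) :
    ∫ s in (0 : ℝ)..1, blend m n (fun _ => 1) (fun j => (-1 : ℝ) ^ j) s
      = 2 * harm (n + m + 2) - harm (m + 2) - harm (n + 2)
        + (n + m + 4 : ℝ) / ((n + 2 : ℝ) * (m + 2 : ℝ)) := by
  have hfirst : ∑ t ∈ range (m + 1),
      ∫ x in (0 : ℝ)..1, ((n + 1 + t).choose (n + 1) : ℝ) * (x ^ t * (1 - x) ^ (n + 1))
        = harm (n + m + 2) - harm (n + 1) := by
    rw [show n + m + 2 = n + 1 + (m + 1) by ring, harm_add, add_sub_cancel_left]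
    refine sum_congr rfl fun t _ => ?_
    rw [add_comm (n + 1) t, integral_choose_mul_pow_mul_one_sub_pow]
    push_cast
    ring
  have hsecond : ∑ t ∈ range (n + 1),
      ∫ x in (0 : ℝ)..1, ((m + 1 + t).choose (m + 1) : ℝ) * (x ^ (m + 1) * (1 - x) ^ t)
        = harm (n + m + 2) - harm (m + 1) := by
    rw [show n + m + 2 = m + 1 + (n + 1) by ring, harm_add, add_sub_cancel_left]
    refine sum_congr rfl fun t _ => ?_
    rw [Nat.choose_symm_add, integral_choose_mul_pow_mul_one_sub_pow]
    push_cast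
    ring
  simp_rw [blend_one_neg_one_pow]
  rw [integral_add (Continuous.intervalIntegrable (by fun_prop) 0 1)
      (Continuous.intervalIntegrable (by fun_prop) 0 1),
    integral_finsetSum fun _ _ => Continuous.intervalIntegrable (by fun_prop) 0 1,
    integral_finsetSum fun _ _ => Continuous.intervalIntegrable (by fun_prop) 0 1,
    hfirst, hsecond, harm_succ (n + 1), harm_succ (m + 1)]
  field_simp
  push_cast
  ring
end

section
/- For a balanced blend (m = n), the Lebesgue function L(s) = Σ_{j=0}^{m} |φ_j(s)| + Σ_{j=0}^{m} |ψ_j(s)| satisfies L(s) ≤ 2 for all s ∈ [0,1], where φ_j and ψ_j are the left and right basis functions of the blend. -/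
open Finset

/-- Hockey stick: `∑_{r=0}^{i} C(c+r, r) = C(c+i+1, i)`. -/
lemma hockey (c : ℕ) : ∀ i : ℕ, ∑ r ∈ range (i+1), (c + r).choose r = (c + i + 1).choose i := by
  intro i
  induction i with
  | zero => simp
  | succ i ih =>
    rw [sum_range_succ, ih]
    have : c + (i+1) + 1 = (c + i + 1) + 1 := by omega
    rw [this, Nat.choose_succ_succ]
    rfl

lemma lemA (m : ℕ) (s : ℝ) : ∀ n : ℕ,
    ∑ k ∈ range (n+1), ((m+k).choose k : ℝ) * s^k * (1-s)^(m+1)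
  = ∑ t ∈ range (n+1), ((m+n+1).choose t : ℝ) * s^t * (1-s)^(m+n+1-t) := by
  intro n
  induction n with
  | zero => simp
  | succ n ih =>
    rw [sum_range_succ, ih]
    set R := ∑ t ∈ range (n+1), ((m+n+1).choose t : ℝ) * s^t * (1-s)^(m+n+1-t) with hR
    -- RHS: peel off t = 0
    rw [show m+(n+1)+1 = (m+n+1)+1 from by ring]
    rw [sum_range_succ' (fun t => (((m+n+1)+1).choose t : ℝ) * s^t * (1-s)^((m+n+1)+1-t)) (n+1)]
    have key : ∀ t ∈ range (n+1),
        (((m+n+1)+1).choose (t+1) : ℝ) * s^(t+1) * (1-s)^((m+n+1)+1-(t+1))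
        = s * (((m+n+1).choose t : ℝ) * s^t * (1-s)^(m+n+1-t))
          + (1-s) * (((m+n+1).choose (t+1) : ℝ) * s^(t+1) * (1-s)^(m+n+1-(t+1))) := by
      intro t ht
      have ht' : t ≤ n := by simpa [Nat.lt_succ_iff] using ht
      have h1 : (m+n+1)+1-(t+1) = m+n+1-t := by omega
      have h2 : m+n+1-t = (m+n+1-(t+1))+1 := by omega
      rw [Nat.choose_succ_succ, h1, h2, pow_succ]
      push_cast
      ring
    rw [sum_congr rfl key, sum_add_distrib, ← mul_sum, ← mul_sum, ← hR]
    have hshift : ∑ t ∈ range (n+1), (((m+n+1).choose (t+1) : ℝ) * s^(t+1) * (1-s)^(m+n+1-(t+1)))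
        = R + ((m+n+1).choose (n+1) : ℝ) * s^(n+1) * (1-s)^(m+n+1-(n+1)) - (1-s)^(m+n+1) := by
      have h := sum_range_succ' (fun t => ((m+n+1).choose t : ℝ) * s^t * (1-s)^(m+n+1-t)) (n+1)
      rw [sum_range_succ] at h
      simp only [Nat.choose_zero_right, pow_zero, Nat.sub_zero, Nat.cast_one, one_mul] at h
      rw [← hR] at h
      linarith [h]
    rw [hshift]
    have e1 : m+n+1-(n+1) = m := by omega
    have e2 : (m+n+1)+1-0 = (m+n+1)+1 := by omega
    rw [e1, e2]
    simp only [Nat.choose_zero_right, pow_zero, Nat.cast_one, pow_succ]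
    ring_nf

lemma tri (f : ℕ → ℕ → ℝ) : ∀ N : ℕ,
    ∑ j ∈ range N, ∑ t ∈ range (N - j), f j t
  = ∑ i ∈ range N, ∑ j ∈ range (i+1), f j (i - j) := by
  intro N
  induction N with
  | zero => simp
  | succ N ih =>
    rw [sum_range_succ (fun i => ∑ j ∈ range (i+1), f j (i-j)) N, ← ih]
    rw [sum_range_succ (fun j => ∑ t ∈ range (N+1-j), f j t) N]
    have h1 : ∀ j ∈ range N, ∑ t ∈ range (N+1-j), f j t
        = ∑ t ∈ range (N-j), f j t + f j (N-j) := by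
      intro j hj
      have hj' : j < N := mem_range.mp hj
      rw [show N+1-j = (N-j)+1 from by omega, sum_range_succ]
    rw [sum_congr rfl h1, sum_add_distrib]
    rw [show N+1-N = 1 from by omega, sum_range_one]
    rw [sum_range_succ (fun j => f j (N - j)) N, Nat.sub_self]
    ring

lemma half_bound (m : ℕ) (s : ℝ) (hs0 : 0 ≤ s) (hs1 : 0 ≤ 1 - s) :
    ∑ j ∈ range (m+1), ∑ k ∈ range (m - j + 1), ((m+k).choose k : ℝ) * s^(k+j) * (1-s)^(m+1)
    ≤ 2 * ∑ i ∈ range (m+1), ((2*m+1).choose i : ℝ) * s^i * (1-s)^(2*m+1-i) := by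
  have step1 : ∀ j ∈ range (m+1),
      ∑ k ∈ range (m - j + 1), ((m+k).choose k : ℝ) * s^(k+j) * (1-s)^(m+1)
    = ∑ t ∈ range (m + 1 - j), ((2*m+1-j).choose t : ℝ) * s^(t+j) * (1-s)^(2*m+1-j-t) := by
    intro j hj
    have hj' : j ≤ m := by simpa [Nat.lt_succ_iff] using hj
    have e1 : ∑ k ∈ range (m-j+1), ((m+k).choose k : ℝ) * s^(k+j) * (1-s)^(m+1)
        = s^j * ∑ k ∈ range (m-j+1), ((m+k).choose k : ℝ) * s^k * (1-s)^(m+1) := by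
      rw [mul_sum]
      refine sum_congr rfl fun k _ => ?_
      rw [pow_add]; ring
    rw [e1, lemA m s (m-j), mul_sum, show m - j + 1 = m + 1 - j from by omega]
    refine sum_congr rfl fun t ht => ?_
    have ht' : t ≤ m - j := by
      have := mem_range.mp ht; omega
    have e2 : m + (m - j) + 1 = 2*m+1-j := by omega
    rw [e2, pow_add]
    ring
  rw [sum_congr rfl step1]
  have htri := tri (fun j t => ((2*m+1-j).choose t : ℝ) * s^(t+j) * (1-s)^(2*m+1-j-t)) (m+1)
  rw [htri]
  have step2 : ∀ i ∈ range (m+1),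
      ∑ j ∈ range (i+1), ((2*m+1-j).choose (i-j) : ℝ) * s^((i-j)+j) * (1-s)^(2*m+1-j-(i-j))
      = ((2*m+2).choose i : ℝ) * s^i * (1-s)^(2*m+1-i) := by
    intro i hi
    have hi' : i ≤ m := by simpa [Nat.lt_succ_iff] using hi
    have e3 : ∀ j ∈ range (i+1),
        ((2*m+1-j).choose (i-j) : ℝ) * s^((i-j)+j) * (1-s)^(2*m+1-j-(i-j))
        = ((2*m+1-j).choose (i-j) : ℝ) * s^i * (1-s)^(2*m+1-i) := by
      intro j hjm
      have hj : j ≤ i := by simpa [Nat.lt_succ_iff] using hjm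
      rw [show (i-j)+j = i from by omega, show 2*m+1-j-(i-j) = 2*m+1-i from by omega]
    rw [sum_congr rfl e3, ← sum_mul, ← sum_mul, ← Nat.cast_sum]
    congr 2
    rw [← sum_range_reflect (fun j => (2*m+1-j).choose (i-j)) (i+1)]
    have e4 : ∀ r ∈ range (i+1),
        (2*m+1-((i+1)-1-r)).choose (i-((i+1)-1-r)) = ((2*m+1-i)+r).choose r := by
      intro r hr
      have hr' : r ≤ i := by simpa [Nat.lt_succ_iff] using hr
      congr 1 <;> omega
    rw [sum_congr rfl e4, hockey (2*m+1-i) i, show 2*m+1-i+i+1 = 2*m+2 from by omega]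
  rw [sum_congr rfl step2, mul_sum]
  refine sum_le_sum fun i hi => ?_
  have hi' : i ≤ m := by simpa [Nat.lt_succ_iff] using hi
  have hb : (2*m+2).choose i ≤ 2 * (2*m+1).choose i := by
    cases i with
    | zero => simp
    | succ i' =>
      rw [show 2*m+2 = (2*m+1)+1 from rfl, Nat.choose_succ_succ]
      simp only [Nat.succ_eq_add_one]
      have hmono : (2*m+1).choose i' ≤ (2*m+1).choose (i'+1) :=
        Nat.choose_le_succ_of_lt_half_left (by omega)
      omega
  have hnn : 0 ≤ s^i * (1-s)^(2*m+1-i) :=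
    mul_nonneg (pow_nonneg hs0 _) (pow_nonneg hs1 _)
  calc ((2*m+2).choose i : ℝ) * s^i * (1-s)^(2*m+1-i)
      = ((2*m+2).choose i : ℝ) * (s^i * (1-s)^(2*m+1-i)) := by ring
    _ ≤ (2 * (2*m+1).choose i : ℝ) * (s^i * (1-s)^(2*m+1-i)) := by
        apply mul_le_mul_of_nonneg_right _ hnn
        exact_mod_cast hb
    _ = 2 * (((2*m+1).choose i : ℝ) * s^i * (1-s)^(2*m+1-i)) := by ring

lemma halves_sum_one (m : ℕ) (s : ℝ) :
    (∑ i ∈ range (m+1), ((2*m+1).choose i : ℝ) * s^i * (1-s)^(2*m+1-i))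
    + (∑ i ∈ range (m+1), ((2*m+1).choose i : ℝ) * (1-s)^i * s^(2*m+1-i)) = 1 := by
  have hb := add_pow s (1-s) (2*m+1)
  rw [show s + (1-s) = 1 from by ring, one_pow] at hb
  rw [show 2*m+1+1 = (m+1)+(m+1) from by ring] at hb
  rw [sum_range_add (fun k => s^k * (1-s)^(2*m+1-k) * ((2*m+1).choose k : ℝ)) (m+1) (m+1)] at hb
  have h2 : ∑ i ∈ range (m+1), ((2*m+1).choose i : ℝ) * (1-s)^i * s^(2*m+1-i)
      = ∑ r ∈ range (m+1), s^((m+1)+r) * (1-s)^(2*m+1-((m+1)+r)) * ((2*m+1).choose ((m+1)+r) : ℝ) := by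
    rw [← sum_range_reflect (fun i => ((2*m+1).choose i : ℝ) * (1-s)^i * s^(2*m+1-i)) (m+1)]
    refine sum_congr rfl fun r hr => ?_
    have hr' : r ≤ m := by simpa [Nat.lt_succ_iff] using hr
    have e1 : (m+1)-1-r = m - r := by omega
    have e2 : 2*m+1-(m-r) = (m+1)+r := by omega
    have e3 : 2*m+1-((m+1)+r) = m - r := by omega
    have e4 : (2*m+1).choose ((m+1)+r) = (2*m+1).choose (m-r) := by
      rw [← Nat.choose_symm (show m - r ≤ 2*m+1 from by omega), show 2*m+1-(m-r) = (m+1)+r from by omega]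
    rw [e1, e2, e3, e4]
    ring
  rw [h2]
  have h3 : ∑ i ∈ range (m+1), ((2*m+1).choose i : ℝ) * s^i * (1-s)^(2*m+1-i)
      = ∑ i ∈ range (m+1), s^i * (1-s)^(2*m+1-i) * ((2*m+1).choose i : ℝ) :=
    sum_congr rfl fun i _ => by ring
  rw [h3, ← hb]

theorem balanced_blend_lebesgue_le_two (m : ℕ) :
    ∀ s ∈ Set.Icc (0 : ℝ) 1,
      (∑ j ∈ Finset.range (m + 1),
          |∑ k ∈ Finset.range (m - j + 1),
              ((m + k).choose k : ℝ) * s ^ (k + j) * (1 - s) ^ (m + 1)|)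
        + (∑ j ∈ Finset.range (m + 1),
            |∑ k ∈ Finset.range (m - j + 1),
                ((m + k).choose k : ℝ) * s ^ (m + 1) * (1 - s) ^ (k + j)|)
        ≤ 2 := by
  rintro s ⟨hs0, hs1'⟩
  have hs1 : 0 ≤ 1 - s := by linarith
  have habs1 : ∀ j ∈ range (m+1),
      |∑ k ∈ range (m - j + 1), ((m + k).choose k : ℝ) * s ^ (k + j) * (1 - s) ^ (m + 1)|
      = ∑ k ∈ range (m - j + 1), ((m + k).choose k : ℝ) * s ^ (k + j) * (1 - s) ^ (m + 1) :=
    fun j _ => abs_of_nonneg (sum_nonneg fun k _ =>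
      mul_nonneg (mul_nonneg (Nat.cast_nonneg _) (pow_nonneg hs0 _)) (pow_nonneg hs1 _))
  have habs2 : ∀ j ∈ range (m+1),
      |∑ k ∈ range (m - j + 1), ((m + k).choose k : ℝ) * s ^ (m + 1) * (1 - s) ^ (k + j)|
      = ∑ k ∈ range (m - j + 1), ((m + k).choose k : ℝ) * (1 - s) ^ (k + j) * s ^ (m + 1) :=
    fun j _ => by
      rw [abs_of_nonneg (sum_nonneg fun k _ =>
        mul_nonneg (mul_nonneg (Nat.cast_nonneg _) (pow_nonneg hs0 _)) (pow_nonneg hs1 _))]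
      exact sum_congr rfl fun k _ => by ring
  rw [sum_congr rfl habs1, sum_congr rfl habs2]
  have h1 := half_bound m s hs0 hs1
  have h2 := half_bound m (1-s) hs1 (by linarith)
  simp only [sub_sub_cancel] at h2
  have hsum := halves_sum_one m s
  linarith
end
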